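/- With the generic wreath-composition setup below, let Y > 0 and let α ∈ 𝔛'(O_K;Y), let z_α ∈ K̄ be a root of F_α, and for 0 ≤ j ≤ k set z_j(α) := F_{j,α}(z_α) (with F_{0,α}(x) := x, so z₀(α) = z_α) and K_{j,α} := K(z_j(α)). Then for every j ∈ [0, k−1], the polynomial F_{j,α}(x) − z_j(α) is the minimal polynomial of z_α over K_{j,α}. -/

import Mathlib

open scoped NumberField Polynomial

/-- The underlying set on which the iterated wreath product `S_{n₁} ≀ S_{n₂} ≀ ⋯` acts. -/
def WreathSpace : List ℕ → Type
  | [] => PUnit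
  | n :: l => Fin n × WreathSpace l

/-- The wreath product `S_m ≀ H` of the full symmetric group `S_m` with a permutation
group `H ⊆ Perm β`, realized as the subgroup of `Perm (Fin m × β)` of permutations whose
induced action on the second coordinate is given by an element of `H`. -/
def symWreath {β : Type*} (m : ℕ) (H : Subgroup (Equiv.Perm β)) :
    Subgroup (Equiv.Perm (Fin m × β)) where
  carrier := {π | ∃ τ ∈ H, ∀ p : Fin m × β, (π p).2 = τ p.2}
  mul_mem' := by
    rintro π₁ π₂ ⟨τ₁, h₁, e₁⟩ ⟨τ₂, h₂, e₂⟩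
    exact ⟨τ₁ * τ₂, mul_mem h₁ h₂, fun p => by
      simp only [Equiv.Perm.mul_apply, e₁, e₂]⟩
  one_mem' := ⟨1, one_mem _, fun p => rfl⟩
  inv_mem' := by
    rintro π ⟨τ, hτ, e⟩
    refine ⟨τ⁻¹, inv_mem hτ, fun p => ?_⟩
    have := e (π⁻¹ p)
    rw [show π (π⁻¹ p) = p by simp] at this
    rw [this, show ∀ x, τ⁻¹ (τ x) = x by simp]

/-- The iterated wreath product `S_{n₁} ≀ S_{n₂} ≀ ⋯ ≀ S_{n_k}` of symmetric groups, as a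
permutation group: `WreathGroup [n₁, …, n_k] = S_{n₁} ≀ (S_{n₂} ≀ (⋯ ≀ S_{n_k}))`. -/
def WreathGroup : (l : List ℕ) → Subgroup (Equiv.Perm (WreathSpace l))
  | [] => ⊤
  | n :: l => symWreath n (WreathGroup l)

/-- The list `(n₁, …, n_k)` of the values of `n` on `1, …, k`. -/
def wreathList (k : ℕ) (n : ℕ → ℕ) : List ℕ := (List.range k).map fun i => n (i + 1)

/-- The house `‖z‖` of an algebraic number `z`: the maximum of `|σ(z)|` over the complex
embeddings `σ` of any number field containing `z`; equivalently, the maximum of the absolute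
values of the complex roots of the minimal polynomial of `z` over `ℚ`. -/
noncomputable def algHouse {F : Type*} [Field F] [CharZero F] (z : F) : ℝ :=
  sSup (Set.range fun w : ((minpoly ℚ z).rootSet ℂ) => ‖(↑w : ℂ)‖)

/-- The polynomial ring `A = O_K[T_{u,v}]` (with an `ℕ × ℕ`-indexed supply of variables;
only the variables `T_{u,v}` with `1 ≤ u ≤ k`, `1 ≤ v ≤ n_u` are used). -/
abbrev WreathCompRing (K : Type*) [Field K] [NumberField K] :=
  MvPolynomial (ℕ × ℕ) (𝓞 K)

/-- The generic polynomial `g_u(x) = x^(n_u) + Σ_{v=1}^{n_u} T_{u,v} x^(n_u - v)`. -/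
noncomputable def wreathGen (K : Type*) [Field K] [NumberField K] (n : ℕ → ℕ) (u : ℕ) :
    Polynomial (WreathCompRing K) :=
  Polynomial.X ^ (n u) +
    ∑ v ∈ Finset.Icc 1 (n u), Polynomial.C (MvPolynomial.X (u, v)) * Polynomial.X ^ (n u - v)

/-- The iterated composition `F_j = g_j(F_{j-1}(x))`, with `F_0 = x` (so `F_1 = g_1`). -/
noncomputable def wreathComp (K : Type*) [Field K] [NumberField K] (n : ℕ → ℕ) :
    ℕ → Polynomial (WreathCompRing K)
  | 0 => Polynomial.X
  | (j + 1) => (wreathGen K n (j + 1)).comp (wreathComp K n j)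

/-- `N_j := n₁ ⋯ n_j`, with `N_0 = 1`. -/
def wreathDeg (n : ℕ → ℕ) (j : ℕ) : ℕ := ∏ v ∈ Finset.Icc 1 j, n v

/-- The specialization `F_{j,α} ∈ O_K[x]` of `F_j` under `Φ_α : T_{u,v} ↦ α_{u,v}`. -/
noncomputable def wreathSpec (K : Type*) [Field K] [NumberField K] (n : ℕ → ℕ)
    (α : ℕ × ℕ → 𝓞 K) (j : ℕ) : Polynomial (𝓞 K) :=
  (wreathComp K n j).map (MvPolynomial.eval α)

/-- The specialization `F_{j,α}`, viewed as a polynomial with coefficients in `K`. -/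
noncomputable def wreathSpecK (K : Type*) [Field K] [NumberField K] (n : ℕ → ℕ)
    (α : ℕ × ℕ → 𝓞 K) (j : ℕ) : Polynomial K :=
  (wreathSpec K n α j).map (algebraMap (𝓞 K) K)

/-- The box `𝔛(O_K; Y)`: vectors `α = (α_{u,v})_{1 ≤ u ≤ k, 1 ≤ v ≤ n_u}` of integers of `K`
with `‖α_{u,v}‖ ≤ Y^(v·N_{u-1})` (coordinates outside the index range are set to `0`). -/
def wreathBox (K : Type*) [Field K] [NumberField K] (k : ℕ) (n : ℕ → ℕ) (Y : ℝ) :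
    Set (ℕ × ℕ → 𝓞 K) :=
  {α | (∀ u ∈ Finset.Icc 1 k, ∀ v ∈ Finset.Icc 1 (n u),
          algHouse ((α (u, v) : K)) ≤ Y ^ (v * wreathDeg n (u - 1))) ∧
        ∀ u v : ℕ, (u ∉ Finset.Icc 1 k ∨ v ∉ Finset.Icc 1 (n u)) → α (u, v) = 0}

/-- The set `𝔛'(O_K; Y)` of `α ∈ 𝔛(O_K; Y)` such that `F_α` is irreducible over `K` and the
Galois group of its splitting field over `K` is isomorphic to `S(n⃗) = S_{n₁} ≀ ⋯ ≀ S_{n_k}`. -/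
def wreathBox' (K : Type*) [Field K] [NumberField K] (k : ℕ) (n : ℕ → ℕ) (Y : ℝ) :
    Set (ℕ × ℕ → 𝓞 K) :=
  {α ∈ wreathBox K k n Y | Irreducible (wreathSpecK K n α k) ∧
    Nonempty ((wreathSpecK K n α k).Gal ≃* WreathGroup (wreathList k n))}


section AuxLemmas

open Polynomial

variable (K : Type*) [Field K] [NumberField K] (n : ℕ → ℕ)

lemma wreathGen_sum_degree_lt (u : ℕ) (hu : 1 ≤ n u) :
    (∑ v ∈ Finset.Icc 1 (n u), Polynomial.C (MvPolynomial.X (u, v)) *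
      Polynomial.X ^ (n u - v) : Polynomial (WreathCompRing K)).degree < (n u : WithBot ℕ) := by
  refine lt_of_le_of_lt (Polynomial.degree_sum_le _ _) ?_
  rw [Finset.sup_lt_iff (by exact WithBot.bot_lt_coe _)]
  intro v hv
  rw [Finset.mem_Icc] at hv
  refine lt_of_le_of_lt ((Polynomial.degree_mul_le _ _).trans
    (add_le_add Polynomial.degree_C_le (Polynomial.degree_X_pow _).le)) ?_
  rw [zero_add]
  exact_mod_cast Nat.cast_lt.mpr (Nat.sub_lt (lt_of_lt_of_le hv.1 hv.2) hv.1)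

lemma wreathGen_monic (u : ℕ) (hu : 1 ≤ n u) : (wreathGen K n u).Monic :=
  Polynomial.monic_X_pow_add (wreathGen_sum_degree_lt K n u hu)

lemma wreathGen_natDegree (u : ℕ) (hu : 1 ≤ n u) : (wreathGen K n u).natDegree = n u := by
  have h := wreathGen_sum_degree_lt K n u hu
  rw [← Polynomial.degree_X_pow (R := WreathCompRing K)] at h
  rw [wreathGen, Polynomial.natDegree_eq_of_degree_eq (Polynomial.degree_add_eq_left_of_degree_lt h),
    Polynomial.natDegree_X_pow]

lemma wreathDeg_pos {j : ℕ} (h : ∀ i ∈ Finset.Icc 1 j, 1 ≤ n i) : 0 < wreathDeg n j :=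
  Finset.prod_pos h

lemma wreathDeg_succ (j : ℕ) : wreathDeg n (j + 1) = wreathDeg n j * n (j + 1) :=
  Finset.prod_Icc_succ_top (Nat.succ_le_succ (Nat.zero_le j)) n

lemma wreathComp_monic_natDegree {j : ℕ} (h : ∀ i ∈ Finset.Icc 1 j, 1 ≤ n i) :
    (wreathComp K n j).Monic ∧ (wreathComp K n j).natDegree = wreathDeg n j := by
  induction j with
  | zero => exact ⟨Polynomial.monic_X, by simp [wreathComp, wreathDeg]⟩
  | succ j ih =>
    have h' : ∀ i ∈ Finset.Icc 1 j, 1 ≤ n i := fun i hi => by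
      rw [Finset.mem_Icc] at hi; exact h i (Finset.mem_Icc.mpr ⟨hi.1, hi.2.trans (Nat.le_succ j)⟩)
    obtain ⟨hm, hd⟩ := ih h'
    have hnu : 1 ≤ n (j + 1) := h (j + 1) (Finset.mem_Icc.mpr ⟨Nat.succ_le_succ (Nat.zero_le j), le_rfl⟩)
    have hcomp : wreathComp K n (j + 1) = (wreathGen K n (j + 1)).comp (wreathComp K n j) := rfl
    refine ⟨?_, ?_⟩
    · rw [hcomp]
      exact (wreathGen_monic K n (j + 1) hnu).comp hm (by rw [hd]; exact (wreathDeg_pos n h').ne')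
    · rw [hcomp, Polynomial.natDegree_comp, wreathGen_natDegree K n (j + 1) hnu, hd,
        wreathDeg_succ, mul_comm]

lemma wreathSpecK_monic (α : ℕ × ℕ → 𝓞 K) {j : ℕ} (h : ∀ i ∈ Finset.Icc 1 j, 1 ≤ n i) :
    (wreathSpecK K n α j).Monic :=
  (((wreathComp_monic_natDegree K n h).1.map _).map _)

lemma wreathSpecK_natDegree (α : ℕ × ℕ → 𝓞 K) {j : ℕ} (h : ∀ i ∈ Finset.Icc 1 j, 1 ≤ n i) :
    (wreathSpecK K n α j).natDegree = wreathDeg n j := by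
  obtain ⟨hm, hd⟩ := wreathComp_monic_natDegree K n h
  rw [wreathSpecK, wreathSpec, (hm.map _).natDegree_map, hm.natDegree_map, hd]

/-- The "upper part" of the composition: `wreathUpper K n j d = g_{j+d} ∘ ⋯ ∘ g_{j+1}`. -/
noncomputable def wreathUpper (jj : ℕ) : ℕ → Polynomial (WreathCompRing K)
  | 0 => Polynomial.X
  | (d + 1) => (wreathGen K n (jj + d + 1)).comp (wreathUpper jj d)

lemma wreathComp_eq_upper_comp (j d : ℕ) :
    wreathComp K n (j + d) = (wreathUpper K n j d).comp (wreathComp K n j) := by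
  induction d with
  | zero => rw [Nat.add_zero, wreathUpper, Polynomial.X_comp]
  | succ d ih =>
    have h1 : wreathComp K n (j + (d + 1)) =
        (wreathGen K n (j + d + 1)).comp (wreathComp K n (j + d)) := rfl
    rw [h1, ih, ← Polynomial.comp_assoc]
    rfl

end AuxLemmas

/-- For `α ∈ 𝔛'(O_K;Y)` and a root `z_α` of `F_α`, the minimal polynomial of `z_α` over
`K_{j,α} = K(z_j(α))` (with `z_j(α) = F_{j,α}(z_α)`) is `F_{j,α}(x) − z_j(α)`,
for every `j ∈ [0, k−1]`. -/
theorem wreath_spec_minpoly (K : Type*) [Field K] [NumberField K] (k : ℕ) (hk : 2 ≤ k)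
    (n : ℕ → ℕ) (hn : ∀ i ∈ Finset.Icc 1 k, 2 ≤ n i)
    (Y : ℝ) (hY : 0 < Y) (α : ℕ × ℕ → 𝓞 K) (hα : α ∈ wreathBox' K k n Y)
    (z : AlgebraicClosure K) (hz : Polynomial.aeval z (wreathSpecK K n α k) = 0) :
    ∀ j < k,
      minpoly (↥(IntermediateField.adjoin K
          ({Polynomial.aeval z (wreathSpecK K n α j)} : Set (AlgebraicClosure K)))) z =
        (wreathSpecK K n α j).map (algebraMap K ↥(IntermediateField.adjoin K
            ({Polynomial.aeval z (wreathSpecK K n α j)} : Set (AlgebraicClosure K)))) -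
          Polynomial.C ⟨Polynomial.aeval z (wreathSpecK K n α j),
            IntermediateField.mem_adjoin_simple_self K _⟩ := by
  intro j hj
  obtain ⟨-, hirr, -⟩ := hα
  have hnk : ∀ i ∈ Finset.Icc 1 k, 1 ≤ n i := fun i hi => le_trans one_le_two (hn i hi)
  have hnj : ∀ i ∈ Finset.Icc 1 j, 1 ≤ n i := fun i hi => by
    rw [Finset.mem_Icc] at hi
    exact hnk i (Finset.mem_Icc.mpr ⟨hi.1, hi.2.trans hj.le⟩)
  set Fk := wreathSpecK K n α k with hFk
  set Fj := wreathSpecK K n α j with hFjdef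
  have hFkm : Fk.Monic := wreathSpecK_monic K n α hnk
  have hFjm : Fj.Monic := wreathSpecK_monic K n α hnj
  set zj := Polynomial.aeval z Fj with hzjdef
  set L := IntermediateField.adjoin K ({zj} : Set (AlgebraicClosure K)) with hLdef
  set G : Polynomial K :=
    ((wreathUpper K n j (k - j)).map (MvPolynomial.eval α)).map (algebraMap (𝓞 K) K) with hGdef
  have hG : Fk = G.comp Fj := by
    rw [hFk, hFjdef, hGdef, wreathSpecK, wreathSpecK, wreathSpec, wreathSpec,
      show k = j + (k - j) by omega, wreathComp_eq_upper_comp, Polynomial.map_comp,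
      Polynomial.map_comp, Nat.add_sub_cancel_left]
  have hGz : Polynomial.aeval zj G = 0 := by
    rw [hG, Polynomial.aeval_comp] at hz; exact hz
  have hG0 : G ≠ 0 := by
    intro h0
    exact hFkm.ne_zero (by rw [hG, h0, Polynomial.zero_comp])
  have hzint : IsIntegral K z := ⟨Fk, hFkm, by rwa [Polynomial.aeval_def] at hz⟩
  have hzjint : IsIntegral K zj := (Algebra.IsAlgebraic.isAlgebraic zj).isIntegral
  have minpKz : minpoly K z = Fk := (minpoly.eq_of_irreducible_of_monic hirr hz hFkm).symm
  have hNj : Fj.natDegree = wreathDeg n j := wreathSpecK_natDegree K n α hnj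
  have hNjpos : 0 < Fj.natDegree := by rw [hNj]; exact wreathDeg_pos n hnj
  set c : L := ⟨zj, IntermediateField.mem_adjoin_simple_self K zj⟩ with hc
  set p : Polynomial L := Fj.map (algebraMap K L) - Polynomial.C c with hp
  have hdegmap : (Fj.map (algebraMap K L)).natDegree = Fj.natDegree := hFjm.natDegree_map _
  have hpm : p.Monic := by
    rw [hp, sub_eq_add_neg]
    refine (hFjm.map _).add_of_left ?_
    refine lt_of_le_of_lt (le_trans (Polynomial.degree_neg _).le Polynomial.degree_C_le) ?_
    rw [Polynomial.degree_eq_natDegree (hFjm.map (algebraMap K L)).ne_zero, hdegmap]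
    exact_mod_cast hNjpos
  have hpz : Polynomial.aeval z p = 0 := by
    rw [hp, map_sub, Polynomial.aeval_map_algebraMap, Polynomial.aeval_C]
    have : (algebraMap L (AlgebraicClosure K)) c = zj := rfl
    rw [this, ← hzjdef, sub_self]
  have hdvd : minpoly L z ∣ p := minpoly.dvd L z hpz
  have hdegp : p.natDegree = Fj.natDegree := by rw [hp, Polynomial.natDegree_sub_C, hdegmap]
  have h1 : (minpoly L z).natDegree ≤ p.natDegree :=
    Polynomial.natDegree_le_of_dvd hdvd hpm.ne_zero
  have h2 : (minpoly K zj).natDegree ≤ G.natDegree :=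
    Polynomial.natDegree_le_of_dvd (minpoly.dvd K zj hGz) hG0
  haveI hLfd : FiniteDimensional K L := IntermediateField.adjoin.finiteDimensional hzjint
  have hzL : IsIntegral L z := hzint.tower_top
  set E := IntermediateField.adjoin L ({z} : Set (AlgebraicClosure K)) with hEdef
  have e1 : Module.finrank K L = (minpoly K zj).natDegree :=
    IntermediateField.adjoin.finrank hzjint
  have e2 : Module.finrank L E = (minpoly L z).natDegree :=
    IntermediateField.adjoin.finrank hzL
  have e3 : Module.finrank K
      (IntermediateField.adjoin K ({z} : Set (AlgebraicClosure K))) = (minpoly K z).natDegree :=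
    IntermediateField.adjoin.finrank hzint
  have hzm : z ∈ IntermediateField.adjoin K ({z} : Set (AlgebraicClosure K)) :=
    IntermediateField.mem_adjoin_simple_self K z
  have hzjmem : zj ∈ IntermediateField.adjoin K ({z} : Set (AlgebraicClosure K)) := by
    have halg : algebraMap (IntermediateField.adjoin K ({z} : Set (AlgebraicClosure K)))
        (AlgebraicClosure K) ⟨z, hzm⟩ = z := rfl
    rw [hzjdef, ← halg, Polynomial.aeval_algebraMap_apply]
    exact SetLike.coe_mem _
  have hres : E.restrictScalars K = IntermediateField.adjoin K ({z} : Set (AlgebraicClosure K)) := by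
    rw [hEdef, hLdef, IntermediateField.adjoin_adjoin_left]
    apply le_antisymm
    · rw [IntermediateField.adjoin_le_iff]
      exact Set.union_subset (Set.singleton_subset_iff.mpr hzjmem)
        (Set.singleton_subset_iff.mpr hzm)
    · exact IntermediateField.adjoin.mono _ _ _ Set.subset_union_right
  have tower : Module.finrank K L * Module.finrank L E = Module.finrank K E :=
    Module.finrank_mul_finrank K L E
  have key : Fk.natDegree = (minpoly K zj).natDegree * (minpoly L z).natDegree := by
    calc Fk.natDegree = (minpoly K z).natDegree := by rw [minpKz]
      _ = Module.finrank K (IntermediateField.adjoin K ({z} : Set (AlgebraicClosure K))) := e3.symm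
      _ = Module.finrank K E := by rw [← hres]; rfl
      _ = Module.finrank K L * Module.finrank L E := tower.symm
      _ = _ := by rw [e1, e2]
  have hcompdeg : Fk.natDegree = G.natDegree * Fj.natDegree := by
    rw [hG, Polynomial.natDegree_comp]
  have hFkpos : 0 < Fk.natDegree := by
    rw [hFk, wreathSpecK_natDegree K n α hnk]; exact wreathDeg_pos n hnk
  have hGpos : 0 < G.natDegree := by
    rcases Nat.eq_zero_or_pos G.natDegree with h0 | h0
    · rw [hcompdeg, h0, Nat.zero_mul] at hFkpos; exact absurd hFkpos (lt_irrefl 0)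
    · exact h0
  have hbe : (minpoly L z).natDegree = Fj.natDegree := by
    have hle : G.natDegree * Fj.natDegree ≤ G.natDegree * (minpoly L z).natDegree := by
      calc G.natDegree * Fj.natDegree
          = (minpoly K zj).natDegree * (minpoly L z).natDegree := by rw [← hcompdeg]; exact key
        _ ≤ G.natDegree * (minpoly L z).natDegree := Nat.mul_le_mul_right _ h2
    exact le_antisymm (le_trans h1 hdegp.le) (Nat.le_of_mul_le_mul_left hle hGpos)
  exact Polynomial.eq_of_dvd_of_natDegree_le_of_leadingCoeff hdvd
    (by rw [hdegp, ← hbe]) (by rw [(minpoly.monic hzL).leadingCoeff, hpm.leadingCoeff])
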